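/- Let n ≥ 1 be an integer. On the elliptic curve W_n over ℚ(t) given by y² = x³ + (1−2tⁿ)x² + t^{2n}x, the point P = (tⁿ, tⁿ) is a ℚ(t)-rational point satisfying 2P = (0,0), and P has order exactly 4 in the group of ℚ(t)-rational points. -/

import Mathlib

/-!
Write `s = tⁿ`, so that `W_n` is `y² = x³ + (1 - 2s)x² + s²x`. On the line `y = x` the cubic
becomes `x (x - s)² = 0`, so `y = x` is the tangent at `P = (s, s)` and meets the curve again
at `(0, 0)`. Hence `2P = -(0, 0) = (0, 0)`, a point of order `2` since its `y`-coordinate vanishes,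
and `P` has order `4`.
-/

/-- `W_n`: the Weierstrass curve `y² = x³ + (1 - 2tⁿ)x² + t^{2n}x` over `ℚ(t)`,
a Weierstrass model of the elliptic surface `Z_(n)`. -/
noncomputable def Wn (n : ℕ) : WeierstrassCurve (RatFunc ℚ) :=
  ⟨0, 1 - 2 * RatFunc.X ^ n, 0, RatFunc.X ^ (2 * n), 0⟩

def WeierstrassCurve.fourTorsionModel {F : Type*} [Field F] (s : F) : WeierstrassCurve F :=
  ⟨0, 1 - 2 * s, 0, s ^ 2, 0⟩

namespace WeierstrassCurve.fourTorsionModel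

open WeierstrassCurve.Affine

variable {F : Type*} [Field F] {s : F}

lemma negY_eq (x y : F) : (fourTorsionModel s).toAffine.negY x y = -y := by
  simp [negY, fourTorsionModel]

lemma nonsingular_zero (hs : s ≠ 0) : (fourTorsionModel s).toAffine.Nonsingular 0 0 := by
  rw [nonsingular_iff, equation_iff]
  refine ⟨by simp [fourTorsionModel], Or.inl ?_⟩
  simpa [fourTorsionModel] using (pow_ne_zero 2 hs).symm

lemma self_ne_negY [NeZero (2 : F)] (hs : s ≠ 0) :
    s ≠ (fourTorsionModel s).toAffine.negY s s := by
  rw [negY_eq]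
  intro h
  have : (2 : F) * s = 0 := by linear_combination h
  exact hs ((mul_eq_zero.mp this).resolve_left two_ne_zero)

lemma nonsingular_self [NeZero (2 : F)] (hs : s ≠ 0) :
    (fourTorsionModel s).toAffine.Nonsingular s s := by
  rw [nonsingular_iff, equation_iff]
  exact ⟨by simp only [fourTorsionModel]; ring, Or.inr (self_ne_negY hs)⟩

variable [DecidableEq F]

lemma two_smul_some_zero (hs : s ≠ 0) : 2 • Point.some 0 0 (nonsingular_zero hs) = 0 :=
  (two_smul ℕ _).trans (Point.add_self_of_Y_eq (by rw [negY_eq, neg_zero]))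

variable [NeZero (2 : F)]

lemma slope_self (hs : s ≠ 0) : (fourTorsionModel s).toAffine.slope s s s s = 1 := by
  have hden : s - -s ≠ 0 := by
    rw [sub_neg_eq_add, ← two_mul]
    exact mul_ne_zero two_ne_zero hs
  rw [slope_of_Y_ne rfl (self_ne_negY hs), negY_eq, div_eq_one_iff_eq hden]
  simp only [fourTorsionModel]
  ring

lemma two_smul_some_self (hs : s ≠ 0) :
    2 • Point.some s s (nonsingular_self hs) = Point.some 0 0 (nonsingular_zero hs) := by
  rw [two_smul, Point.add_self_of_Y_ne (self_ne_negY hs)]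
  simp only [addY, negAddY, addX, negY, slope_self hs]
  congr 1 <;> simp only [fourTorsionModel] <;> ring

lemma addOrderOf_some_self (hs : s ≠ 0) :
    addOrderOf (Point.some s s (nonsingular_self hs)) = 4 := by
  have h4 : 2 ^ 2 • Point.some s s (nonsingular_self hs) = 0 := by
    rw [pow_two, mul_smul, two_smul_some_self hs, two_smul_some_zero hs]
  have h2 : ¬ 2 ^ 1 • Point.some s s (nonsingular_self hs) = 0 := by
    rw [pow_one, two_smul_some_self hs]
    exact Point.some_ne_zero _
  exact addOrderOf_eq_prime_pow h2 h4

end WeierstrassCurve.fourTorsionModel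

lemma Wn_eq_fourTorsionModel (n : ℕ) : Wn n = .fourTorsionModel (RatFunc.X ^ n) := by
  rw [Wn, WeierstrassCurve.fourTorsionModel, pow_mul']

open Classical in
theorem stmt8_general (n : ℕ) :
    ∃ (h : (Wn n).toAffine.Nonsingular (RatFunc.X ^ n) (RatFunc.X ^ n))
      (h0 : (Wn n).toAffine.Nonsingular 0 0),
      2 • (WeierstrassCurve.Affine.Point.some _ _ h) = WeierstrassCurve.Affine.Point.some _ _ h0 ∧
      addOrderOf (WeierstrassCurve.Affine.Point.some _ _ h) = 4 := by
  have hX : (RatFunc.X : RatFunc ℚ) ^ n ≠ 0 := pow_ne_zero n RatFunc.X_ne_zero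
  rw [Wn_eq_fourTorsionModel]
  exact ⟨_, _, WeierstrassCurve.fourTorsionModel.two_smul_some_self hX,
    WeierstrassCurve.fourTorsionModel.addOrderOf_some_self hX⟩

open Classical in
/-- For `n ≥ 1`, on the elliptic curve `W_n : y² = x³ + (1 - 2tⁿ)x² + t^{2n}x` over `ℚ(t)`,
the point `P = (tⁿ, tⁿ)` is a rational point satisfying `2P = (0, 0)`, and `P` has order
exactly `4` in the group of `ℚ(t)`-rational points. -/
theorem stmt8 (n : ℕ) (hn : 1 ≤ n) :
    ∃ (h : (Wn n).toAffine.Nonsingular (RatFunc.X ^ n) (RatFunc.X ^ n))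
      (h0 : (Wn n).toAffine.Nonsingular 0 0),
      2 • (WeierstrassCurve.Affine.Point.some _ _ h) = WeierstrassCurve.Affine.Point.some _ _ h0 ∧
      addOrderOf (WeierstrassCurve.Affine.Point.some _ _ h) = 4 :=
  stmt8_general n
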